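/- arXiv:1910.09386 — 4 statements merged into one kernel-verified Lean document; each statement's English description precedes it below -/
import Mathlib

section
/- Suppose A ∈ GL(d+1, R) and x, y ∈ R^d satisfy ι(x) = c · ι(y)·A for some nonzero scalar c (i.e., y A projects to x). Define D = Π·A·H(x). Then the first row of A·H(x) equals −(y_1,...,y_d)·D, i.e., A·H(x) = H(y)·Π·A·H(x). Consequently, for two such matrices A, A' with intermediate points, the matrices D compose: Π·A'·A·H(x) = (Π·A'·H(y))·(Π·A·H(x)). -/
open Matrix

def iota {d : ℕ} (x : Fin d → ℝ) : Fin (d + 1) → ℝ := Fin.cases 1 x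

def Hmat {d : ℕ} (x : Fin d → ℝ) : Matrix (Fin (d + 1)) (Fin d) ℝ :=
  Matrix.of (Fin.cases (fun j => -x j) (fun i j => if i = j then 1 else 0))

def Pmat (d : ℕ) : Matrix (Fin d) (Fin (d + 1)) ℝ :=
  Matrix.of fun i j => if j = i.succ then 1 else 0

lemma Pmat_mul_apply {d m : ℕ} (M : Matrix (Fin (d + 1)) (Fin m) ℝ) (i : Fin d) (j : Fin m) :
    (Pmat d * M) i j = M i.succ j := by
  simp [Matrix.mul_apply, Pmat]

lemma iota_vecMul_Hmat {d : ℕ} (x : Fin d → ℝ) : iota x ᵥ* Hmat x = 0 := by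
  funext j
  simp [Matrix.vecMul, dotProduct, Fin.sum_univ_succ, iota, Hmat, mul_ite]

lemma key {d : ℕ} (A : Matrix (Fin (d + 1)) (Fin (d + 1)) ℝ) (x y : Fin d → ℝ)
    (c : ℝ) (hc : c ≠ 0) (h : iota x = c • (iota y ᵥ* A)) :
    iota y ᵥ* (A * Hmat x) = 0 := by
  have hy : iota y ᵥ* A = c⁻¹ • iota x := by
    rw [h, smul_smul, inv_mul_cancel₀ hc, one_smul]
  rw [← Matrix.vecMul_vecMul, hy]
  funext j
  have := congrFun (iota_vecMul_Hmat x) j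
  simp only [Matrix.vecMul, dotProduct, Pi.smul_apply, smul_eq_mul, Pi.zero_apply,
    mul_assoc, ← Finset.mul_sum] at this ⊢
  rw [this, mul_zero]

/-- If `ι(x) = c · ι(y)·A`, then with `D = Π·A·H(x)` the first row of `A·H(x)` is
`-(y_1,…,y_d)·D`, i.e. `A·H(x) = H(y)·Π·A·H(x)`; consequently the `D`-matrices compose. -/
theorem stmt2 {d : ℕ} (A A' : Matrix (Fin (d + 1)) (Fin (d + 1)) ℝ)
    (hA : IsUnit A.det) (hA' : IsUnit A'.det)
    (x y z : Fin d → ℝ) (c c' : ℝ) (hc : c ≠ 0) (hc' : c' ≠ 0)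
    (h : iota x = c • (iota y ᵥ* A)) (h' : iota y = c' • (iota z ᵥ* A')) :
    (∀ j : Fin d, (A * Hmat x) 0 j = -∑ i : Fin d, y i * (Pmat d * A * Hmat x) i j) ∧
    A * Hmat x = Hmat y * (Pmat d * A * Hmat x) ∧
    Pmat d * (A' * A) * Hmat x = (Pmat d * A' * Hmat y) * (Pmat d * A * Hmat x) := by
  have hk := key A x y c hc h
  have hP : ∀ (i : Fin d) (j : Fin d), (Pmat d * A * Hmat x) i j = (A * Hmat x) i.succ j := by
    intro i j; rw [Matrix.mul_assoc, Pmat_mul_apply]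
  have h1 : ∀ j : Fin d, (A * Hmat x) 0 j = -∑ i : Fin d, y i * (Pmat d * A * Hmat x) i j := by
    intro j
    have := congrFun hk j
    simp only [Matrix.vecMul, dotProduct, Fin.sum_univ_succ, iota, Fin.cases_zero,
      Fin.cases_succ, Pi.zero_apply, one_mul] at this
    rw [Finset.sum_congr rfl fun i _ => by rw [hP i j]]
    linarith
  have h2 : A * Hmat x = Hmat y * (Pmat d * A * Hmat x) := by
    ext i j
    refine Fin.cases ?_ (fun i => ?_) i
    · rw [h1 j, Matrix.mul_apply]
      simp [Hmat, neg_mul, Finset.sum_neg_distrib]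
    · have e : (Hmat y * (Pmat d * A * Hmat x)) i.succ j = (Pmat d * A * Hmat x) i j := by
        rw [Matrix.mul_apply]
        simp [Hmat, Finset.sum_ite_eq]
      rw [e, hP]
  refine ⟨h1, h2, ?_⟩
  calc Pmat d * (A' * A) * Hmat x = Pmat d * A' * (A * Hmat x) := by
        simp only [Matrix.mul_assoc]
    _ = Pmat d * A' * (Hmat y * (Pmat d * A * Hmat x)) := by rw [← h2]
    _ = (Pmat d * A' * Hmat y) * (Pmat d * A * Hmat x) := by simp only [Matrix.mul_assoc]
end

section
/- Approximation error as a ratio of 2×2 minors: under the hypotheses of the convergent identity (ι(x) = λ·ι(x^{(n)})·A^{(n)}, λ > 0, x^{(n)} ∈ Δ), for all 1 ≤ i, j ≤ d one has x_i − p_{j,i}^{(n)}/q_j^{(n)} = [ (p_{0,i}^{(n)} q_j^{(n)} − q_0^{(n)} p_{j,i}^{(n)}) + Σ_{k=1}^d x_k^{(n)} (p_{k,i}^{(n)} q_j^{(n)} − q_k^{(n)} p_{j,i}^{(n)}) ] / [ (q_0^{(n)} + Σ_{k=1}^d q_k^{(n)} x_k^{(n)}) q_j^{(n)} ], provided q_j^{(n)}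 ≠ 0 and the denominator is nonzero. -/
open Matrix

/-- Membership in `Δ = {x : 1 ≥ x_1 ≥ … ≥ x_d ≥ 0}`. -/
def memDelta {d : ℕ} (x : Fin d → ℝ) : Prop :=
  (∀ i, 0 ≤ x i) ∧ (∀ i, x i ≤ 1) ∧ ∀ i j : Fin d, i ≤ j → x j ≤ x i

/-- Approximation error as a ratio of `2×2` minors: under the hypotheses of the convergent
identity (`ι(x) = λ·ι(x⁽ⁿ⁾)·A`, `λ > 0`, `x, x⁽ⁿ⁾ ∈ Δ`), for all `1 ≤ i, j ≤ d` with
`q_j ≠ 0` and nonzero denominator,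
`x_i − p_{j,i}/q_j = [(p_{0,i} q_j − q_0 p_{j,i}) + Σ_k x⁽ⁿ⁾_k (p_{k,i} q_j − q_k p_{j,i})]
  / [(q_0 + Σ_k q_k x⁽ⁿ⁾_k)·q_j]`. -/
theorem stmt12 {d : ℕ} (A : Matrix (Fin (d + 1)) (Fin (d + 1)) ℝ) (hA : IsUnit A.det)
    (x xn : Fin d → ℝ) (hx : memDelta x) (hxn : memDelta xn)
    (lam : ℝ) (hlam : 0 < lam) (h : iota x = lam • (iota xn ᵥ* A))
    (i j : Fin d) (hq : A j.succ 0 ≠ 0)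
    (hden : (A 0 0 + ∑ k : Fin d, A k.succ 0 * xn k) * A j.succ 0 ≠ 0) :
    x i - A j.succ i.succ / A j.succ 0 =
      ((A 0 i.succ * A j.succ 0 - A 0 0 * A j.succ i.succ) +
        ∑ k : Fin d, xn k * (A k.succ i.succ * A j.succ 0 - A k.succ 0 * A j.succ i.succ)) /
      ((A 0 0 + ∑ k : Fin d, A k.succ 0 * xn k) * A j.succ 0) := by
  have hS0 : (A 0 0 + ∑ k : Fin d, A k.succ 0 * xn k) ≠ 0 := fun h0 => hden (by rw [h0]; ring)
  have h0 := congrFun h 0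
  have hi := congrFun h i.succ
  simp only [iota, Fin.cases_zero, Fin.cases_succ, Pi.smul_apply, vecMul, dotProduct,
    Fin.sum_univ_succ, smul_eq_mul, one_mul] at h0 hi
  have comm : ∀ c : Fin (d+1), ∑ k : Fin d, xn k * A k.succ c = ∑ k : Fin d, A k.succ c * xn k :=
    fun c => Finset.sum_congr rfl fun k _ => mul_comm _ _
  rw [comm] at h0 hi
  have hlam' : lam = (A 0 0 + ∑ k : Fin d, A k.succ 0 * xn k)⁻¹ := by
    field_simp
    linarith [h0]
  rw [hi, hlam']
  have expand : ((A 0 i.succ * A j.succ 0 - A 0 0 * A j.succ i.succ) +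
      ∑ k : Fin d, xn k * (A k.succ i.succ * A j.succ 0 - A k.succ 0 * A j.succ i.succ)) =
      (A 0 i.succ + ∑ k : Fin d, A k.succ i.succ * xn k) * A j.succ 0 -
      (A 0 0 + ∑ k : Fin d, A k.succ 0 * xn k) * A j.succ i.succ := by
    have : ∀ k : Fin d, xn k * (A k.succ i.succ * A j.succ 0 - A k.succ 0 * A j.succ i.succ) =
        A k.succ i.succ * xn k * A j.succ 0 - A k.succ 0 * xn k * A j.succ i.succ :=
      fun k => by ring
    rw [Finset.sum_congr rfl fun k _ => this k, Finset.sum_sub_distrib,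
      add_mul, add_mul, Finset.sum_mul, Finset.sum_mul]
    ring
  rw [expand]
  field_simp
end

section
/- Balancedness implies the converse Paley–Ursell inequality: with notation as before, suppose additionally that there is c > 0 with ‖(row j of A^{(n)})‖ ≥ c·‖A^{(n)}‖ for all j (balancedness), that all entries of A^{(n)} are nonnegative, and that all coordinates of x^{(n)} lie in [0,1]. Then ‖D^{(n)}(x)‖ ≤ C·‖∧² A^{(n)}‖ / ‖A^{(n)}‖ for a constant C depending only on d and c, where D^{(n)}(x) = (p_{j,i}^{(n)} − q_j^{(n)} x_i)_{1≤i,j≤d}. -/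
open Matrix

/-- Sup of absolute values of the entries of a matrix (a norm on matrices). -/
noncomputable def entrySup {m n : Type*} [Fintype m] [Fintype n] (A : Matrix m n ℝ) : ℝ :=
  ⨆ p : m × n, |A p.1 p.2|

/-- The second exterior power of a square matrix: the matrix of its `2×2` minors. -/
def wedge2 {m : Type*} (A : Matrix m m ℝ) [LT m] :
    Matrix {p : m × m // p.1 < p.2} {p : m × m // p.1 < p.2} ℝ :=
  Matrix.of fun i j =>
    A i.1.1 j.1.1 * A i.1.2 j.1.2 - A i.1.1 j.1.2 * A i.1.2 j.1.1

theorem abs_le_entrySup {m n : Type*} [Fintype m] [Fintype n] (A : Matrix m n ℝ)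
    (i : m) (j : n) : |A i j| ≤ entrySup A :=
  le_ciSup (f := fun p : m × n => |A p.1 p.2|)
    (Set.Finite.bddAbove (Set.finite_range _)) (i, j)

/-- Balancedness implies the converse Paley–Ursell inequality: if `A` is a nonnegative
invertible matrix whose rows are balanced (`‖row j‖ ≥ c‖A‖` for all `j`), and
`ι(x) = λ·ι(x⁽ⁿ⁾)·A` with `λ > 0`, `x ∈ Δ`, and all coordinates of `x⁽ⁿ⁾` in `[0,1]`,
then `‖D(x)‖·‖A‖ ≤ C·‖∧²A‖`, i.e. `‖D(x)‖ ≤ C·‖∧²A‖/‖A‖`, for a constant `C`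
depending only on `d` and `c`, where `D(x) = (p_{i,j} − q_i x_j)_{1≤i,j≤d}`. -/
theorem stmt13 {d : ℕ} (c : ℝ) (hc : 0 < c) :
    ∃ C : ℝ, 0 < C ∧ ∀ A : Matrix (Fin (d + 1)) (Fin (d + 1)) ℝ, IsUnit A.det →
      (∀ i j, 0 ≤ A i j) →
      (∀ j : Fin (d + 1), c * entrySup A ≤ ⨆ i : Fin (d + 1), |A j i|) →
      ∀ x xn : Fin d → ℝ, memDelta x → (∀ k, 0 ≤ xn k ∧ xn k ≤ 1) →
      ∀ lam : ℝ, 0 < lam → iota x = lam • (iota xn ᵥ* A) →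
      entrySup (Matrix.of fun i j : Fin d => A i.succ j.succ - A i.succ 0 * x j) *
          entrySup A ≤ C * entrySup (wedge2 A) := by
  refine ⟨(d + 1) / c, by positivity, ?_⟩
  intro A hdet hApos hbal x xn hx hxn lam hlam hiota
  set t : Fin (d + 1) → ℝ := iota xn with ht
  have ht0 : t 0 = 1 := rfl
  have htnn : ∀ k, 0 ≤ t k := by
    intro k
    induction k using Fin.cases with
    | zero => norm_num [ht, iota]
    | succ k => simpa [ht, iota] using (hxn k).1
  have htle : ∀ k, t k ≤ 1 := by
    intro k
    induction k using Fin.cases with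
    | zero => norm_num [ht, iota]
    | succ k => simpa [ht, iota] using (hxn k).2
  set S : ℝ := ∑ k, t k * A k 0 with hS
  have h0 : (1 : ℝ) = lam * S := by
    have := congrFun hiota 0
    simpa [iota, Matrix.vecMul, dotProduct, hS, ht] using this
  have hSpos : 0 < S := by nlinarith
  have hxj : ∀ j : Fin d, ∑ k, t k * A k j.succ = S * x j := by
    intro j
    have h1 : x j = lam * ∑ k, t k * A k j.succ := by
      have := congrFun hiota j.succ
      simpa [iota, Matrix.vecMul, dotProduct, ht] using this
    have hl : lam ≠ 0 := ne_of_gt hlam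
    have h2 : S * x j = (lam * S) * ∑ k, t k * A k j.succ := by rw [h1]; ring
    rw [← h0, one_mul] at h2
    exact h2.symm
  have hterm : ∀ (j : Fin (d + 1)) (k : Fin (d + 1)), (0:ℝ) ≤ t k * A k j :=
    fun j k => mul_nonneg (htnn k) (hApos k j)
  have hcol : ∀ j : Fin (d + 1), A 0 j ≤ S := by
    intro j
    induction j using Fin.cases with
    | zero =>
      calc A 0 0 = t 0 * A 0 0 := by rw [ht0, one_mul]
        _ ≤ S := Finset.single_le_sum (fun k _ => hterm 0 k) (Finset.mem_univ 0)
    | succ j =>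
      calc A 0 j.succ = t 0 * A 0 j.succ := by rw [ht0, one_mul]
        _ ≤ ∑ k, t k * A k j.succ :=
            Finset.single_le_sum (fun k _ => hterm j.succ k) (Finset.mem_univ 0)
        _ = S * x j := hxj j
        _ ≤ S * 1 := mul_le_mul_of_nonneg_left (hx.2.1 j) hSpos.le
        _ = S := mul_one S
  set N : ℝ := entrySup A with hN
  have hNS : c * N ≤ S := by
    refine (hbal 0).trans (ciSup_le fun i => ?_)
    rw [abs_of_nonneg (hApos 0 i)]
    exact hcol i
  set W : ℝ := entrySup (wedge2 A) with hWdef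
  have hW : 0 ≤ W := Real.iSup_nonneg fun _ => abs_nonneg _
  have key : ∀ i j : Fin d,
      S * |A i.succ j.succ - A i.succ 0 * x j| ≤ (d + 1) * W := by
    intro i j
    have hexp : S * (A i.succ j.succ - A i.succ 0 * x j)
        = ∑ k, t k * (A k 0 * A i.succ j.succ - A i.succ 0 * A k j.succ) := by
      have h1 : S * A i.succ j.succ = ∑ k, t k * A k 0 * A i.succ j.succ := by
        rw [hS, Finset.sum_mul]
      have h2 : S * (A i.succ 0 * x j) = ∑ k, A i.succ 0 * (t k * A k j.succ) := by
        rw [← Finset.mul_sum, hxj j]; ring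
      rw [mul_sub, h1, h2, ← Finset.sum_sub_distrib]
      exact Finset.sum_congr rfl fun k _ => by ring
    have hm : ∀ k : Fin (d + 1),
        |A k 0 * A i.succ j.succ - A i.succ 0 * A k j.succ| ≤ W := by
      intro k
      rcases lt_trichotomy k i.succ with h | h | h
      · have heq : A k 0 * A i.succ j.succ - A i.succ 0 * A k j.succ
            = wedge2 A ⟨(k, i.succ), h⟩ ⟨(0, j.succ), j.succ_pos⟩ := by
          simp only [wedge2, Matrix.of_apply]; ring
        rw [heq]
        exact abs_le_entrySup (wedge2 A) ⟨(k, i.succ), h⟩ ⟨(0, j.succ), j.succ_pos⟩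
      · rw [h]
        simpa using hW
      · have heq : A k 0 * A i.succ j.succ - A i.succ 0 * A k j.succ
            = -(wedge2 A ⟨(i.succ, k), h⟩ ⟨(0, j.succ), j.succ_pos⟩) := by
          simp only [wedge2, Matrix.of_apply]; ring
        rw [heq, abs_neg]
        exact abs_le_entrySup (wedge2 A) ⟨(i.succ, k), h⟩ ⟨(0, j.succ), j.succ_pos⟩
    calc S * |A i.succ j.succ - A i.succ 0 * x j|
        = |S * (A i.succ j.succ - A i.succ 0 * x j)| := by
          rw [abs_mul, abs_of_nonneg hSpos.le]
      _ = |∑ k, t k * (A k 0 * A i.succ j.succ - A i.succ 0 * A k j.succ)| := by rw [hexp]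
      _ ≤ ∑ k, |t k * (A k 0 * A i.succ j.succ - A i.succ 0 * A k j.succ)| :=
          Finset.abs_sum_le_sum_abs _ _
      _ ≤ ∑ _k : Fin (d + 1), W := by
          refine Finset.sum_le_sum fun k _ => ?_
          rw [abs_mul]
          calc |t k| * |A k 0 * A i.succ j.succ - A i.succ 0 * A k j.succ|
              ≤ 1 * W := mul_le_mul (by rw [abs_of_nonneg (htnn k)]; exact htle k)
                (hm k) (abs_nonneg _) zero_le_one
            _ = W := one_mul W
      _ = (d + 1) * W := by simp [mul_comm]
  rcases Nat.eq_zero_or_pos d with hd | hd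
  · subst hd
    have hempty : entrySup (Matrix.of fun i j : Fin 0 => A i.succ j.succ - A i.succ 0 * x j)
        = 0 := by
      rw [entrySup, Real.iSup_of_isEmpty]
    rw [hempty, zero_mul]
    positivity
  · have hNpos : 0 < N := by
      have hSN : S ≤ (d + 1) * N := by
        calc S ≤ ∑ _k : Fin (d + 1), N := by
              refine Finset.sum_le_sum fun k _ => ?_
              calc t k * A k 0 ≤ 1 * A k 0 :=
                    mul_le_mul_of_nonneg_right (htle k) (hApos k 0)
                _ = A k 0 := one_mul _
                _ ≤ |A k 0| := le_abs_self _
                _ ≤ N := abs_le_entrySup A k 0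
          _ = (d + 1) * N := by simp [mul_comm]
      nlinarith
    haveI : NeZero d := ⟨hd.ne'⟩
    rw [← le_div_iff₀ hNpos]
    refine ciSup_le fun p => ?_
    rw [le_div_iff₀ hNpos]
    have h1 := key p.1 p.2
    have hND : N ≤ S / c := (le_div_iff₀ hc).2 (by linarith [hNS])
    calc |(Matrix.of fun i j : Fin d => A i.succ j.succ - A i.succ 0 * x j) p.1 p.2| * N
        ≤ |A p.1.succ p.2.succ - A p.1.succ 0 * x p.2| * (S / c) := by
          rw [Matrix.of_apply]
          exact mul_le_mul_of_nonneg_left hND (abs_nonneg _)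
      _ = S * |A p.1.succ p.2.succ - A p.1.succ 0 * x p.2| / c := by ring
      _ ≤ (d + 1) * W / c := by
          gcongr
      _ = (d + 1) / c * W := by ring
end

section
/- The 2-dimensional Selmer map is well defined on the absorbing set: define Δ_{S_a} = {(x_1,x_2) : 1 ≥ x_1 ≥ x_2 ≥ 0, 2x_2 > 1} and Δ_{S_b} = {(x_1,x_2) : 1 ≥ x_1 ≥ x_2 ≥ 0, 2x_2 < 1 ≤ x_1 + x_2}, and T_S(x_1,x_2) = the descending reordering of (1−x_2, x_1, x_2) divided by its largest entry, with the leading 1 removed. Then T_S maps Δ_{S_a} ∪ Δ_{S_b} into the closure of Δ_{S_a} ∪ Δ_{S_b}; explicitly, for x ∈ Δ_{S_a}, T_S(x) = (x_2/x_1, (1−x_2)/x_1), and for x ∈ Δ_{S_b}, T_S(x) = ((1−x_2)/x_1, x_2/x_1) when x_2 ≤ 1−x_2 ≤ x_1 (cases at the boundary excluded), and in both cases the image satisfies x'_1 + x'_2 ≥ 1. -/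
/-- The closure of `Δ_{S_a} ∪ Δ_{S_b}`. -/
def MemAbsorbingClosure (y₁ y₂ : ℝ) : Prop :=
  y₁ ≤ 1 ∧ y₂ ≤ y₁ ∧ 0 ≤ y₂ ∧ 1 ≤ y₁ + y₂

theorem memAbsorbingClosure_div {a b c : ℝ} (hc : 0 < c) (hac : a ≤ c) (hba : b ≤ a)
    (hb : 0 ≤ b) (hsum : c ≤ a + b) : MemAbsorbingClosure (a / c) (b / c) :=
  ⟨div_le_one_of_le₀ hac hc.le, div_le_div_of_nonneg_right hba hc.le, div_nonneg hb hc.le,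
    by rwa [← add_div, one_le_div₀ hc]⟩

/-- The 2-dimensional Selmer map is well defined on the absorbing set
`Δ_{S_a} ∪ Δ_{S_b}`: for `x ∈ Δ_{S_a}` (`2x₂ > 1`) the vector `(1−x₂, x₁, x₂)` sorts
descendingly to `(x₁, x₂, 1−x₂)` and `T_S(x) = (x₂/x₁, (1−x₂)/x₁)`; for `x ∈ Δ_{S_b}`
(`2x₂ < 1 ≤ x₁ + x₂`) it sorts to `(x₁, 1−x₂, x₂)` and `T_S(x) = ((1−x₂)/x₁, x₂/x₁)`.
In both cases the image lies in the closure of the absorbing set: it is descendingly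
ordered, lies in `[0,1]²`, and its coordinate sum is `≥ 1`. -/
theorem stmt14 (x₁ x₂ : ℝ) (h1 : x₁ ≤ 1) (h2 : x₂ ≤ x₁) (h3 : 0 ≤ x₂) :
    (2 * x₂ > 1 →
      1 - x₂ < x₂ ∧ x₂ ≤ x₁ ∧
      x₂ / x₁ ≤ 1 ∧ (1 - x₂) / x₁ ≤ x₂ / x₁ ∧ 0 ≤ (1 - x₂) / x₁ ∧
      1 ≤ x₂ / x₁ + (1 - x₂) / x₁) ∧
    (2 * x₂ < 1 → 1 ≤ x₁ + x₂ →
      x₂ < 1 - x₂ ∧ 1 - x₂ ≤ x₁ ∧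
      (1 - x₂) / x₁ ≤ 1 ∧ x₂ / x₁ ≤ (1 - x₂) / x₁ ∧ 0 ≤ x₂ / x₁ ∧
      1 ≤ (1 - x₂) / x₁ + x₂ / x₁) := by
  -- The two smaller entries of `(1 - x₂, x₁, x₂)` always sum to `1 ≥ x₁`.
  have hsum : x₁ ≤ x₂ + (1 - x₂) := by linarith
  constructor
  · intro ha
    exact ⟨by linarith, h2,
      memAbsorbingClosure_div (by linarith) h2 (by linarith) (by linarith) hsum⟩
  · intro hb hx
    exact ⟨by linarith, by linarith,
      memAbsorbingClosure_div (by linarith) (by linarith) (by linarith) h3 (by linarith)⟩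
end
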